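/- arXiv:1812.03960 — 10 statements merged into one kernel-verified Lean document; each statement's English description precedes it below -/
import Mathlib

section
/- For every real ρ > 0 and every natural number n ≥ 1, the set of simple graphs on Fin n that admit a (ρ,1)-noisy embedding into the hyperbolic plane ℍ has cardinality at least 2^(⌊n/2⌋ · ⌈n/2⌉). -/
open scoped UpperHalfPlane

/-- For every `ρ > 0` and `n ≥ 1`, the number of simple graphs on `Fin n`
admitting a `(ρ,1)`-noisy embedding into the hyperbolic plane `ℍ` is at least
`2 ^ (⌊n/2⌋ * ⌈n/2⌉)`. -/
theorem stmt_2 (ρ : ℝ) (hρ : 0 < ρ) (n : ℕ) (hn : 1 ≤ n) :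
    2 ^ (n / 2 * ((n + 1) / 2)) ≤
      Nat.card {G : SimpleGraph (Fin n) //
        ∃ η : Fin n → ℍ, ∀ v w : Fin n, v ≠ w →
          (dist (η v) (η w) < 2 * ρ → G.Adj v w) ∧
          (dist (η v) (η w) > 2 * ρ * 1 → ¬ G.Adj v w)} := by
  classical
  set k := n / 2 with hk
  set m := (n + 1) / 2 with hm
  have hkm : k + m = n := by omega
  -- two points at hyperbolic distance exactly `2ρ`
  let p : ℍ := UpperHalfPlane.mk Complex.I (by simp)
  let q : ℍ := UpperHalfPlane.mk (Real.exp (2 * ρ) * Complex.I)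
      (by simp [Complex.mul_im, -Complex.ofReal_exp]; exact Real.exp_pos _)
  have hpq : dist p q = 2 * ρ := by
    have hre : p.re = q.re := by
      show Complex.I.re = (↑(Real.exp (2 * ρ)) * Complex.I).re
      simp [Complex.mul_re, -Complex.ofReal_exp]
    rw [UpperHalfPlane.dist_of_re_eq hre]
    have hpim : p.im = 1 := by show Complex.I.im = 1; simp
    have hqim : q.im = Real.exp (2 * ρ) := by simp [q, UpperHalfPlane.mk_im, Complex.mul_im, -Complex.ofReal_exp]
    rw [hpim, hqim, Real.log_exp, Real.log_one, Real.dist_eq]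
    rw [abs_of_nonpos (by linarith)]
    ring
  -- the embedding
  let η : Fin n → ℍ := fun v => if (v : ℕ) < k then p else q
  -- adjacency data
  let g : (Fin k × Fin m → Bool) → Fin n → Fin n → Bool := fun f v w =>
    if hv : (v : ℕ) < k then
      if hw : (w : ℕ) < k then true
      else f (⟨v, hv⟩, ⟨(w : ℕ) - k, by have := w.isLt; omega⟩)
    else
      if hw : (w : ℕ) < k then f (⟨w, hw⟩, ⟨(v : ℕ) - k, by have := v.isLt; omega⟩)
      else true
  have gsymm : ∀ f v w, g f v w = g f w v := by
    intro f v w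
    by_cases hv : (v : ℕ) < k <;> by_cases hw : (w : ℕ) < k <;>
      simp [g, hv, hw]
  let Φ : (Fin k × Fin m → Bool) → SimpleGraph (Fin n) := fun f =>
    { Adj := fun v w => v ≠ w ∧ g f v w = true
      symm := by constructor; intro v w h; exact ⟨h.1.symm, (gsymm f w v).trans h.2⟩
      loopless := by constructor; intro v h; exact h.1 rfl }
  have hmem : ∀ f : Fin k × Fin m → Bool,
      ∃ η' : Fin n → ℍ, ∀ v w : Fin n, v ≠ w →
        (dist (η' v) (η' w) < 2 * ρ → (Φ f).Adj v w) ∧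
        (dist (η' v) (η' w) > 2 * ρ * 1 → ¬ (Φ f).Adj v w) := by
    intro f
    refine ⟨η, fun v w hvw => ?_⟩
    by_cases hv : (v : ℕ) < k <;> by_cases hw : (w : ℕ) < k
    · have : η v = η w := by simp [η, hv, hw]
      rw [this, dist_self]
      exact ⟨fun _ => ⟨hvw, by simp [g, hv, hw]⟩, fun h => absurd h (by simp; linarith)⟩
    · have : dist (η v) (η w) = 2 * ρ := by simp [η, hv, hw]; exact hpq
      rw [this]
      constructor
      · intro h; exact absurd h (lt_irrefl _)
      · intro h; exact absurd h (by simp)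
    · have : dist (η v) (η w) = 2 * ρ := by
        simp [η, hv, hw]; rw [dist_comm]; exact hpq
      rw [this]
      constructor
      · intro h; exact absurd h (lt_irrefl _)
      · intro h; exact absurd h (by simp)
    · have : η v = η w := by simp [η, hv, hw]
      rw [this, dist_self]
      exact ⟨fun _ => ⟨hvw, by simp [g, hv, hw]⟩, fun h => absurd h (by simp; linarith)⟩
  let Ψ : (Fin k × Fin m → Bool) →
      {G : SimpleGraph (Fin n) //
        ∃ η : Fin n → ℍ, ∀ v w : Fin n, v ≠ w →
          (dist (η v) (η w) < 2 * ρ → G.Adj v w) ∧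
          (dist (η v) (η w) > 2 * ρ * 1 → ¬ G.Adj v w)} := fun f => ⟨Φ f, hmem f⟩
  have hΨ : Function.Injective Ψ := by
    intro f f' h
    have hG : Φ f = Φ f' := congrArg Subtype.val h
    funext ij
    obtain ⟨i, j⟩ := ij
    have hiv : (i : ℕ) < n := by have := i.isLt; omega
    have hjw : k + (j : ℕ) < n := by have := j.isLt; omega
    set v : Fin n := ⟨i, hiv⟩
    set w : Fin n := ⟨k + j, hjw⟩
    have hvk : (v : ℕ) < k := i.isLt
    have hwk : ¬ (w : ℕ) < k := by simp [w]
    have hvw : v ≠ w := by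
      intro hh
      have : (v : ℕ) = (w : ℕ) := congrArg _ hh
      simp [v, w] at this
      omega
    have key : ∀ f'' : Fin k × Fin m → Bool, g f'' v w = f'' (i, j) := by
      intro f''
      have h1 : (⟨(v : ℕ), hvk⟩ : Fin k) = i := by ext; rfl
      have h2 : (⟨(w : ℕ) - k, by have := w.isLt; omega⟩ : Fin m) = j := by
        ext; simp [w]
      simp only [g, dif_pos hvk, dif_neg hwk]
      rw [show (⟨(v : ℕ), hvk⟩ : Fin k) = i from h1]
      congr 1
      ext1
      · rfl
      · exact h2
    have hadj : (Φ f).Adj v w ↔ (Φ f').Adj v w := by rw [hG]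
    have e1 : (Φ f).Adj v w ↔ f (i, j) = true := by
      simp only [Φ, key f]
      exact ⟨fun h => h.2, fun h => ⟨hvw, h⟩⟩
    have e2 : (Φ f').Adj v w ↔ f' (i, j) = true := by
      simp only [Φ, key f']
      exact ⟨fun h => h.2, fun h => ⟨hvw, h⟩⟩
    have : f (i, j) = true ↔ f' (i, j) = true := by rw [← e1, ← e2]; exact hadj
    exact Bool.eq_iff_iff.mpr this
  have hcard : Nat.card (Fin k × Fin m → Bool) = 2 ^ (k * m) := by
    simp only [Nat.card_eq_fintype_card, Fintype.card_fun, Fintype.card_prod,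
      Fintype.card_fin, Fintype.card_bool]
  calc 2 ^ (k * m) = Nat.card (Fin k × Fin m → Bool) := hcard.symm
    _ ≤ _ := Nat.card_le_card_of_injective Ψ hΨ
end

section
/- For all reals ρ > 0 and ν ≥ 1 and every natural number k, there exists a constant C > 0 such that for all natural numbers n ≥ 2, the number of simple graphs on Fin n that admit a (ρ,ν)-noisy, (ρ,k)-shallow embedding into the hyperbolic plane ℍ is at most 2^(C · n · log n). -/
open scoped UpperHalfPlane

open UpperHalfPlane Metric Real
open scoped Classical

noncomputable def hIso (c : ℍ) : ℍ → ℍ :=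
  fun z => (UpperHalfPlane.re c : ℝ) +ᵥ ((⟨UpperHalfPlane.im c, c.im_pos⟩ : {x : ℝ // 0 < x}) • z)

lemma hIso_isometry (c : ℍ) : Isometry (hIso c) :=
  (UpperHalfPlane.isometry_real_vadd c.re).comp (UpperHalfPlane.isometry_pos_mul ⟨c.im, c.im_pos⟩)

lemma hIso_surj (c : ℍ) : Function.Surjective (hIso c) := by
  intro x
  refine ⟨(⟨(UpperHalfPlane.im c)⁻¹, inv_pos.2 c.im_pos⟩ : {x : ℝ // 0 < x}) •
    ((-UpperHalfPlane.re c) +ᵥ x), ?_⟩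
  unfold hIso
  rw [smul_smul]
  have : ((⟨UpperHalfPlane.im c, c.im_pos⟩ : {x : ℝ // 0 < x}) *
      ⟨(UpperHalfPlane.im c)⁻¹, inv_pos.2 c.im_pos⟩) = 1 :=
    Subtype.ext (mul_inv_cancel₀ (ne_of_gt c.im_pos))
  rw [this, one_smul, vadd_vadd, add_neg_cancel, zero_vadd]

lemma hIso_I (c : ℍ) : hIso c UpperHalfPlane.I = c := by
  apply UpperHalfPlane.ext'
  · simp [hIso, UpperHalfPlane.vadd_re, UpperHalfPlane.pos_real_re, UpperHalfPlane.I_re, UpperHalfPlane.I_im]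
  · simp [hIso, UpperHalfPlane.vadd_im, UpperHalfPlane.pos_real_im, UpperHalfPlane.I_re, UpperHalfPlane.I_im]

lemma hCover (ρ R : ℝ) (hρ : 0 < ρ) :
    ∃ N : ℕ, ∀ c : ℍ, ∃ t : Finset ℍ, t.card ≤ N ∧
      Metric.closedBall c R ⊆ ⋃ y ∈ t, Metric.ball y ρ := by
  obtain ⟨s, hsfin, hscov⟩ :=
    Metric.totallyBounded_iff.1 (isCompact_closedBall UpperHalfPlane.I R).totallyBounded ρ hρ
  refine ⟨hsfin.toFinset.card, fun c => ⟨hsfin.toFinset.image (hIso c), Finset.card_image_le, ?_⟩⟩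
  intro x hx
  obtain ⟨z, hz⟩ := hIso_surj c x
  have hzball : z ∈ Metric.closedBall UpperHalfPlane.I R := by
    rw [Metric.mem_closedBall]
    have := (hIso_isometry c).dist_eq z UpperHalfPlane.I
    rw [hz, hIso_I] at this
    rw [← this]
    exact hx
  obtain ⟨y, hy, hxy⟩ := Set.mem_iUnion₂.1 (hscov hzball)
  refine Set.mem_iUnion₂.2 ⟨hIso c y, Finset.mem_image_of_mem _ (hsfin.mem_toFinset.2 hy), ?_⟩
  rw [Metric.mem_ball, ← hz, (hIso_isometry c).dist_eq]
  exact hxy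

lemma degree_bound {n : ℕ} (G : SimpleGraph (Fin n)) (η : Fin n → ℍ) (ρ ν : ℝ) (k N : ℕ)
    (hcov : ∀ c : ℍ, ∃ t : Finset ℍ, t.card ≤ N ∧
      Metric.closedBall c (2*ρ*ν) ⊆ ⋃ y ∈ t, Metric.ball y ρ)
    (hnoisy : ∀ v w : Fin n, v ≠ w → (dist (η v) (η w) > 2 * ρ * ν → ¬ G.Adj v w))
    (hshallow : ∀ x : ℍ, Nat.card {v : Fin n // dist (η v) x ≤ ρ} ≤ k)
    (v : Fin n) : (G.neighborFinset v).card ≤ N * k := by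
  obtain ⟨t, htc, htcov⟩ := hcov (η v)
  have hsub : G.neighborFinset v ⊆
      t.biUnion (fun y => Finset.univ.filter fun w => dist (η w) y ≤ ρ) := by
    intro w hw
    rw [SimpleGraph.mem_neighborFinset] at hw
    have hne : v ≠ w := hw.ne
    have hle : dist (η v) (η w) ≤ 2 * ρ * ν := by
      by_contra hgt
      exact hnoisy v w hne (lt_of_not_ge hgt) hw
    have : η w ∈ Metric.closedBall (η v) (2*ρ*ν) := by
      rw [Metric.mem_closedBall, dist_comm]; exact hle
    obtain ⟨y, hy, hxy⟩ := Set.mem_iUnion₂.1 (htcov this)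
    exact Finset.mem_biUnion.2 ⟨y, hy, Finset.mem_filter.2 ⟨Finset.mem_univ _,
      le_of_lt (Metric.mem_ball.1 hxy)⟩⟩
  calc (G.neighborFinset v).card ≤ _ := Finset.card_le_card hsub
    _ ≤ ∑ y ∈ t, (Finset.univ.filter fun w => dist (η w) y ≤ ρ).card :=
        Finset.card_biUnion_le
    _ ≤ ∑ _y ∈ t, k := by
        refine Finset.sum_le_sum fun y _ => ?_
        have := hshallow y
        rwa [Nat.card_eq_fintype_card, Fintype.card_subtype] at this
    _ = t.card * k := by rw [Finset.sum_const, smul_eq_mul]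
    _ ≤ N * k := Nat.mul_le_mul_right k htc

lemma count_bound (n K : ℕ) (hn : 1 ≤ n) (P : SimpleGraph (Fin n) → Prop)
    (h : ∀ G, P G → ∀ v, (G.neighborFinset v).card ≤ K) :
    Nat.card {G : SimpleGraph (Fin n) // P G} ≤ ((K+1) * n^K)^n := by
  have hinj : Function.Injective
      (fun G : {G : SimpleGraph (Fin n) // P G} =>
        (⟨fun v => G.1.neighborFinset v, fun v => h G.1 G.2 v⟩ :
          {f : Fin n → Finset (Fin n) // ∀ v, (f v).card ≤ K})) := by
    rintro ⟨G₁, h₁⟩ ⟨G₂, h₂⟩ hG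
    simp only [Subtype.mk.injEq] at hG ⊢
    ext v w
    rw [← SimpleGraph.mem_neighborFinset, ← SimpleGraph.mem_neighborFinset,
      congrFun hG v]
  calc Nat.card {G : SimpleGraph (Fin n) // P G}
      ≤ Nat.card {f : Fin n → Finset (Fin n) // ∀ v, (f v).card ≤ K} :=
        Nat.card_le_card_of_injective _ hinj
    _ = Nat.card (Fin n → {S : Finset (Fin n) // S.card ≤ K}) :=
        Nat.card_congr (Equiv.subtypePiEquivPi (p := fun _ (S : Finset (Fin n)) => S.card ≤ K))
    _ = Nat.card {S : Finset (Fin n) // S.card ≤ K} ^ n := by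
        rw [Nat.card_fun]; simp
    _ ≤ ((K+1) * n^K)^n := by
        refine Nat.pow_le_pow_left ?_ n
        rw [Nat.card_eq_fintype_card, Fintype.card_subtype]
        have hsub : (Finset.univ.filter fun S : Finset (Fin n) => S.card ≤ K) ⊆
            (Finset.range (K+1)).biUnion (fun i => Finset.powersetCard i Finset.univ) := by
          intro S hS
          rw [Finset.mem_filter] at hS
          exact Finset.mem_biUnion.2 ⟨S.card, Finset.mem_range.2 (Nat.lt_succ_of_le hS.2),
            Finset.mem_powersetCard.2 ⟨Finset.subset_univ S, rfl⟩⟩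
        calc (Finset.univ.filter fun S : Finset (Fin n) => S.card ≤ K).card
            ≤ _ := Finset.card_le_card hsub
          _ ≤ ∑ i ∈ Finset.range (K+1), (Finset.powersetCard i (Finset.univ : Finset (Fin n))).card :=
              Finset.card_biUnion_le
          _ ≤ ∑ _i ∈ Finset.range (K+1), n^K := by
              refine Finset.sum_le_sum fun i hi => ?_
              rw [Finset.card_powersetCard, Finset.card_univ, Fintype.card_fin]
              calc n.choose i ≤ n^i := Nat.choose_le_pow n i
                _ ≤ n^K := Nat.pow_le_pow_right hn (Nat.le_of_lt_succ (Finset.mem_range.1 hi))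
          _ = (K+1) * n^K := by rw [Finset.sum_const, Finset.card_range, smul_eq_mul]

/-- For all `ρ > 0`, `ν ≥ 1` and `k : ℕ`, there is a constant `C > 0` such that
for all `n ≥ 2`, the number of simple graphs on `Fin n` admitting a `(ρ,ν)`-noisy,
`(ρ,k)`-shallow embedding into the hyperbolic plane `ℍ` is at most `2 ^ (C * n * log n)`. -/
theorem stmt_4 (ρ ν : ℝ) (hρ : 0 < ρ) (hν : 1 ≤ ν) (k : ℕ) :
    ∃ C : ℝ, 0 < C ∧ ∀ n : ℕ, 2 ≤ n →
      (Nat.card {G : SimpleGraph (Fin n) //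
          ∃ η : Fin n → ℍ,
            (∀ v w : Fin n, v ≠ w →
              (dist (η v) (η w) < 2 * ρ → G.Adj v w) ∧
              (dist (η v) (η w) > 2 * ρ * ν → ¬ G.Adj v w)) ∧
            (∀ x : ℍ, Nat.card {v : Fin n // dist (η v) x ≤ ρ} ≤ k)} : ℝ)
        ≤ (2 : ℝ) ^ (C * n * Real.log n) := by
  obtain ⟨N, hN⟩ := hCover ρ (2*ρ*ν) hρ
  set K := N * k with hK
  have hl2 : (0:ℝ) < Real.log 2 := Real.log_pos one_lt_two
  have hlK : (0:ℝ) ≤ Real.log (K+1) := by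
    apply Real.log_nonneg
    push_cast
    linarith [Nat.cast_nonneg (α := ℝ) K]
  refine ⟨(Real.log (K+1) / Real.log 2 + K + 1) / Real.log 2, by positivity, fun n hn => ?_⟩
  have hn1 : 1 ≤ n := le_trans one_le_two hn
  have hcard : Nat.card {G : SimpleGraph (Fin n) //
          ∃ η : Fin n → ℍ,
            (∀ v w : Fin n, v ≠ w →
              (dist (η v) (η w) < 2 * ρ → G.Adj v w) ∧
              (dist (η v) (η w) > 2 * ρ * ν → ¬ G.Adj v w)) ∧
            (∀ x : ℍ, Nat.card {v : Fin n // dist (η v) x ≤ ρ} ≤ k)}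
      ≤ ((K+1) * n^K)^n := by
    refine count_bound n K hn1 _ fun G hG v => ?_
    obtain ⟨η, hnoisy, hshallow⟩ := hG
    exact degree_bound G η ρ ν k N hN (fun v w hvw => (hnoisy v w hvw).2) hshallow v
  have hcast : (Nat.card {G : SimpleGraph (Fin n) //
          ∃ η : Fin n → ℍ,
            (∀ v w : Fin n, v ≠ w →
              (dist (η v) (η w) < 2 * ρ → G.Adj v w) ∧
              (dist (η v) (η w) > 2 * ρ * ν → ¬ G.Adj v w)) ∧
            (∀ x : ℍ, Nat.card {v : Fin n // dist (η v) x ≤ ρ} ≤ k)} : ℝ)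
      ≤ (((K:ℝ)+1) * (n:ℝ)^K)^n := by
    calc _ ≤ ((((K+1) * n^K)^n : ℕ) : ℝ) := Nat.cast_le.2 hcard
      _ = _ := by push_cast; ring
  refine le_trans hcast ?_
  -- real analytic bound
  have hnR : (2:ℝ) ≤ (n:ℝ) := by exact_mod_cast hn
  have hnpos : (0:ℝ) < n := by linarith
  have hlnn : Real.log 2 ≤ Real.log n := Real.log_le_log two_pos hnR
  have hbase : (0:ℝ) < ((K:ℝ)+1) * (n:ℝ)^K := by positivity
  have hLHSpos : (0:ℝ) < (((K:ℝ)+1) * (n:ℝ)^K)^n := by positivity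
  rw [← Real.exp_log hLHSpos, Real.rpow_def_of_pos two_pos]
  apply Real.exp_le_exp.2
  rw [Real.log_pow, Real.log_mul (by positivity) (by positivity), Real.log_pow]
  have hdiv : Real.log (K+1) / Real.log 2 * Real.log 2 = Real.log (K+1) :=
    div_mul_cancel₀ _ (ne_of_gt hl2)
  have key : Real.log (K+1) + (K:ℝ) * Real.log n
      ≤ (Real.log (K+1) / Real.log 2 + K + 1) * Real.log n := by
    nlinarith [mul_le_mul_of_nonneg_left hlnn (div_nonneg hlK hl2.le)]
  calc (n:ℝ) * (Real.log ((K:ℝ)+1) + (K:ℝ) * Real.log n)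
      ≤ (n:ℝ) * ((Real.log (K+1) / Real.log 2 + K + 1) * Real.log n) := by
        exact mul_le_mul_of_nonneg_left key hnpos.le
    _ = Real.log 2 * ((Real.log (K+1) / Real.log 2 + K + 1) / Real.log 2 * n * Real.log n) := by
        field_simp
end

section
/- There exist constants c₁, c₂ > 0 such that for every natural number δ ≥ 1 and every real number x ≥ 0 satisfying cosh x = cot(π/3) · cot(π/2^(δ+2)), one has c₁·δ ≤ x ≤ c₂·δ. (This quantity x is the distance from the center of a tile to a vertex in the regular tiling of the hyperbolic plane by regular 2^(δ+2)-gons meeting three at each vertex, obtained from the hyperbolic law of cosines for angles.) -/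
open Real

set_option maxHeartbeats 1000000 in
/-- There are constants `c₁, c₂ > 0` such that for every `δ ≥ 1` and every
`x ≥ 0` with `cosh x = cot(π/3) * cot(π/2^(δ+2))`, one has `c₁·δ ≤ x ≤ c₂·δ`. -/
theorem stmt_5 :
    ∃ c₁ c₂ : ℝ, 0 < c₁ ∧ 0 < c₂ ∧
      ∀ δ : ℕ, 1 ≤ δ → ∀ x : ℝ, 0 ≤ x →
        Real.cosh x = Real.cot (π / 3) * Real.cot (π / 2 ^ (δ + 2)) →
        c₁ * δ ≤ x ∧ x ≤ c₂ * δ := by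
  refine ⟨Real.log (51/50), 2 * Real.log 2, Real.log_pos (by norm_num),
    by positivity, ?_⟩
  intro δ hδ x hx heq
  have hpi := Real.pi_pos
  have hpil : π < 3.15 := Real.pi_lt_d2
  have hpig : (3.14:ℝ) < π := Real.pi_gt_d2
  set t : ℝ := π / 2 ^ (δ + 2) with ht_def
  have hp8 : (8:ℝ) ≤ 2 ^ (δ + 2) := by
    calc (8:ℝ) = 2 ^ 3 := by norm_num
    _ ≤ 2 ^ (δ + 2) := by
      apply pow_le_pow_right₀ (by norm_num); omega
  have hppos : (0:ℝ) < 2 ^ (δ + 2) := by positivity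
  have ht0 : 0 < t := by positivity
  have ht1 : t ≤ π / 4 := by
    rw [ht_def, div_le_div_iff₀ hppos (by norm_num)]
    nlinarith
  -- trig values
  have hs : 0 < Real.sin t := Real.sin_pos_of_pos_of_lt_pi ht0 (by nlinarith)
  have hst : Real.sin t ≤ t := Real.sin_le ht0.le
  have hcos : Real.sqrt 2 / 2 ≤ Real.cos t := by
    rw [← Real.cos_pi_div_four]
    exact Real.cos_le_cos_of_nonneg_of_le_pi ht0.le (by nlinarith) ht1
  have hcos1 : Real.cos t ≤ 1 := Real.cos_le_one t
  have hsqrt2 : (1.414:ℝ) ≤ Real.sqrt 2 := by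
    rw [show (2:ℝ) = 1.414^2 + 0.000604 by norm_num]
    nlinarith [Real.sq_sqrt (by norm_num : (0:ℝ) ≤ 1.414^2 + 0.000604),
      Real.sqrt_nonneg (1.414^2 + 0.000604)]
  have hsqrt3l : (1.73:ℝ) ≤ Real.sqrt 3 := by
    nlinarith [Real.sq_sqrt (by norm_num : (0:ℝ) ≤ 3), Real.sqrt_nonneg 3]
  have hsqrt3u : Real.sqrt 3 ≤ 1.74 := by
    nlinarith [Real.sq_sqrt (by norm_num : (0:ℝ) ≤ 3), Real.sqrt_nonneg 3]
  -- cot bounds at t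
  have hcotu : Real.cot t ≤ 1 / t := by
    rw [Real.cot_eq_cos_div_sin]
    have htan : t < Real.tan t := Real.lt_tan ht0 (by nlinarith)
    rw [Real.tan_eq_sin_div_cos] at htan
    have hc : 0 < Real.cos t := by nlinarith [Real.sqrt_nonneg 2]
    rw [lt_div_iff₀ hc] at htan
    rw [div_le_div_iff₀ hs ht0]
    nlinarith
  have hcotl : Real.sqrt 2 / 2 / t ≤ Real.cot t := by
    rw [Real.cot_eq_cos_div_sin, div_le_div_iff₀ ht0 hs]
    nlinarith
  -- cot (π/3)
  have hcot3 : Real.cot (π/3) = 1 / Real.sqrt 3 := by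
    rw [Real.cot_eq_cos_div_sin, Real.cos_pi_div_three, Real.sin_pi_div_three]
    rw [eq_div_iff (by positivity)]
    field_simp
  have hs3 : (0:ℝ) < Real.sqrt 3 := by nlinarith
  -- cosh bounds
  have h2d : (0:ℝ) < (2:ℝ)^δ := by positivity
  have hpow : (2:ℝ) ^ (δ + 2) = 4 * 2 ^ δ := by ring
  have hchU : Real.cosh x ≤ 2 ^ δ := by
    rw [heq, hcot3]
    have hc30 : (0:ℝ) < 1 / Real.sqrt 3 := by positivity
    calc 1 / Real.sqrt 3 * Real.cot t ≤ 1 / Real.sqrt 3 * (1/t) :=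
          mul_le_mul_of_nonneg_left hcotu hc30.le
      _ = 2 ^ (δ+2) / (Real.sqrt 3 * π) := by
          rw [ht_def]; field_simp
      _ ≤ 2 ^ δ := by
          rw [div_le_iff₀ (by positivity), hpow]
          have h4 : (4:ℝ) ≤ Real.sqrt 3 * π := by nlinarith
          nlinarith [mul_le_mul_of_nonneg_left h4 h2d.le]
  have hchL : (51/100 : ℝ) * 2 ^ δ ≤ Real.cosh x := by
    rw [heq, hcot3]
    calc (51/100 : ℝ) * 2 ^ δ ≤ 1 / Real.sqrt 3 * (Real.sqrt 2 / 2 / t) := by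
          have heq2 : 1 / Real.sqrt 3 * (Real.sqrt 2 / 2 / t)
              = Real.sqrt 2 * 2 ^ (δ + 2) / (2 * Real.sqrt 3 * π) := by
            rw [ht_def]; field_simp
          rw [heq2, le_div_iff₀ (by positivity), hpow]
          have hs3p : Real.sqrt 3 * π ≤ 5.481 := by nlinarith
          have h1 : 2^δ * (Real.sqrt 3 * π) ≤ 2^δ * 5.481 :=
            mul_le_mul_of_nonneg_left hs3p h2d.le
          have h2 : 2^δ * 1.414 ≤ 2^δ * Real.sqrt 2 :=
            mul_le_mul_of_nonneg_left hsqrt2 h2d.le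
          nlinarith
      _ ≤ 1 / Real.sqrt 3 * Real.cot t :=
          mul_le_mul_of_nonneg_left hcotl (by positivity)
  -- translate to exp
  have hexpL : Real.exp x ≥ (51/100 : ℝ) * 2 ^ δ := by
    nlinarith [Real.cosh_add_sinh x, Real.sinh_nonneg_iff.mpr hx]
  have hexpU : Real.exp x ≤ 2 * 2 ^ δ := by
    nlinarith [Real.cosh_add_sinh x, Real.cosh_sub_sinh x, Real.exp_pos (-x)]
  constructor
  · have h1 : Real.log ((51/100 : ℝ) * 2 ^ δ) ≤ x := by
      rw [← Real.log_exp x]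
      exact Real.log_le_log (by positivity) hexpL
    have h2 : Real.log ((51/100 : ℝ) * 2 ^ δ) = Real.log (51/100) + δ * Real.log 2 := by
      rw [Real.log_mul (by norm_num) (by positivity), Real.log_pow]
    have h3 : Real.log (51/50 : ℝ) = Real.log (51/100) + Real.log 2 := by
      rw [← Real.log_mul (by norm_num) (by norm_num)]; norm_num
    have h4 : Real.log ((51:ℝ)/100) ≤ 0 := Real.log_nonpos (by norm_num) (by norm_num)
    have h5 : (1:ℝ) ≤ δ := by exact_mod_cast hδ
    nlinarith
  · have h1 : x ≤ Real.log (2 * 2 ^ δ) := by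
      rw [← Real.log_exp x]
      exact Real.log_le_log (Real.exp_pos x) hexpU
    have h2 : Real.log (2 * 2^δ : ℝ) = (δ + 1) * Real.log 2 := by
      rw [Real.log_mul (by norm_num) (by positivity), Real.log_pow]
      ring
    have h5 : (1:ℝ) ≤ δ := by exact_mod_cast hδ
    have hl2 : 0 < Real.log 2 := Real.log_pos (by norm_num)
    nlinarith
end

section
/- As the natural number δ tends to infinity, the ratio (π − (π/2 + π/3 + π/2^(δ+2))) / log(y_δ + √(y_δ² − 1)), where y_δ = cos(π/2^(δ+2)) / sin(π/3), converges to π/(3·log 3). Moreover, π/(3·log 3) > 0.953. (The numerator is 1/2^(δ+3) times the area of a tile and the denominator is 1/2^(δ+3) times the perimeter of a tile in the regular tiling of the hyperbolic plane by 2^(δ+2)-gons meeting three per vertex; note that log(y + √(y² − 1)) = arcosh y.) -/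
open Real Filter Topology

/- The denominator is `arcosh y_δ` with `y_δ → 1 / sin (π/3) = 2/√3`, and `arcosh (2/√3) = log √3`
by continuity of `arcosh`, while the numerator tends to `π/6`; hence the ratio tends to
`(π/6) / (log 3 / 2)`. The bound follows from `π > 3.141592` and `log 3 < 1.0986122888`. -/

theorem continuousAt_arcosh {x : ℝ} (hx : 0 < x) : ContinuousAt arcosh x := by
  unfold arcosh
  exact ContinuousAt.log (by fun_prop) (by positivity)

theorem arcosh_inv_sin_pi_div_three : arcosh (1 / sin (π / 3)) = log 3 / 2 := by
  rw [sin_pi_div_three, one_div_div]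
  have hsqrt : √3 ^ 2 = 3 := sq_sqrt (by norm_num)
  have hpos : 0 < √3 := by positivity
  have hsq : (2 / √3) ^ 2 - 1 = (1 / √3) ^ 2 := by
    field_simp
    linarith
  have hsum : 2 / √3 + 1 / √3 = √3 := by
    field_simp
    linarith
  rw [arcosh, hsq, sqrt_sq (by positivity), hsum, log_sqrt (by norm_num)]

theorem tendsto_div_two_pow_add_atTop_nhds_zero (a : ℝ) (k : ℕ) :
    Tendsto (fun n : ℕ => a / 2 ^ (n + k)) atTop (𝓝 0) :=
  tendsto_const_nhds.div_atTop <|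
    (tendsto_pow_atTop_atTop_of_one_lt one_lt_two).comp (tendsto_add_atTop_nat k)

theorem Filter.Tendsto.arcosh_cos_div {α : Type*} {l : Filter α} {f : α → ℝ}
    (hf : Tendsto f l (𝓝 0)) {c : ℝ} (hc : 0 < c) :
    Tendsto (fun x => arcosh (cos (f x) / c)) l (𝓝 (arcosh (1 / c))) := by
  have hcos : Tendsto (fun x => cos (f x) / c) l (𝓝 (1 / c)) := by
    simpa using (continuous_cos.tendsto 0).comp hf |>.div_const c
  exact (continuousAt_arcosh (by positivity)).tendsto.comp hcos

theorem pi_div_three_mul_log_three_gt : 0.953 < π / (3 * log 3) := by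
  have hlog : 0 < log 3 := log_pos (by norm_num)
  rw [lt_div_iff₀ (by positivity)]
  nlinarith [pi_gt_d6, log_three_lt_d9]

/-- With `y δ = cos(π/2^(δ+2)) / sin(π/3)`, the ratio
`(π − (π/2 + π/3 + π/2^(δ+2))) / log (y δ + √(y δ² − 1))` tends to `π / (3 log 3)` as
`δ → ∞`, and `π / (3 log 3) > 0.953`. -/
theorem stmt_6 :
    Filter.Tendsto (fun δ : ℕ =>
        (π - (π / 2 + π / 3 + π / 2 ^ (δ + 2))) /
          Real.log (Real.cos (π / 2 ^ (δ + 2)) / Real.sin (π / 3) +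
            Real.sqrt ((Real.cos (π / 2 ^ (δ + 2)) / Real.sin (π / 3)) ^ 2 - 1)))
      Filter.atTop (nhds (π / (3 * Real.log 3))) ∧
    0.953 < π / (3 * Real.log 3) := by
  refine ⟨?_, pi_div_three_mul_log_three_gt⟩
  have hangle := tendsto_div_two_pow_add_atTop_nhds_zero π 2
  have hdefect : Tendsto (fun δ : ℕ => π - (π / 2 + π / 3 + π / 2 ^ (δ + 2))) atTop
      (𝓝 (π / 6)) := by
    convert tendsto_const_nhds.sub (tendsto_const_nhds.add hangle) using 2
    ring
  have hsin : 0 < sin (π / 3) := by rw [sin_pi_div_three]; positivity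
  have hperimeter := hangle.arcosh_cos_div hsin
  rw [arcosh_inv_sin_pi_div_three] at hperimeter
  have hlog : 0 < log 3 := log_pos (by norm_num)
  have hratio := hdefect.div hperimeter (by positivity)
  rwa [show π / 6 / (log 3 / 2) = π / (3 * log 3) by field_simp; ring] at hratio
end

section
/- For every real s > 0, the closed hyperbolic ball of radius (1/2)·log(s+1) centered at the point of the upper half-plane with real part s/2 and imaginary part √(s+1) is contained in the square Q_s = {z ∈ ℍ : 0 ≤ Re z ≤ s and 1 ≤ Im z ≤ s+1}. (Thus the base square of the half-plane tiling contains an inscribed hyperbolic ball of radius (1/2)·log(s+1).) -/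
open scoped UpperHalfPlane

/-- For `s > 0`, the closed hyperbolic ball of radius `(1/2)·log(s+1)`
centered at the point with real part `s/2` and imaginary part `√(s+1)` is contained in
the square `Q_s = {z ∈ ℍ : 0 ≤ Re z ≤ s, 1 ≤ Im z ≤ s+1}`. -/
theorem stmt_10 (s : ℝ) (hs : 0 < s) :
    Metric.closedBall
        (⟨⟨s / 2, Real.sqrt (s + 1)⟩, show (0:ℝ) < Real.sqrt (s + 1) from
          Real.sqrt_pos.mpr (by linarith)⟩ : ℍ)
        ((1 / 2) * Real.log (s + 1))
      ⊆ {z : ℍ | 0 ≤ z.re ∧ z.re ≤ s ∧ 1 ≤ z.im ∧ z.im ≤ s + 1} := by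
  intro z hz
  set a : ℝ := Real.sqrt (s + 1) with ha
  have ha2 : a ^ 2 = s + 1 := Real.sq_sqrt (by linarith)
  have hann : 0 ≤ a := Real.sqrt_nonneg _
  have ha1 : 1 ≤ a := by nlinarith
  have ha0 : 0 < a := by linarith
  have hloga : Real.log a ≤ a - 1 := Real.log_le_sub_one_of_pos ha0
  have hR : (1 / 2) * Real.log (s + 1) = Real.log a := by
    rw [ha, Real.log_sqrt (by linarith)]; ring
  have hcosh : a * Real.cosh (Real.log a) = (s + 2) / 2 := by
    rw [Real.cosh_log ha0]; field_simp; nlinarith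
  have hsinh : a * Real.sinh (Real.log a) = s / 2 := by
    rw [Real.sinh_log ha0]; field_simp; nlinarith
  have hd := (UpperHalfPlane.dist_le_iff_dist_coe_center_le).1 hz
  rw [hR] at hd
  have hc : ((UpperHalfPlane.center (⟨⟨s / 2, a⟩, ha0⟩ : ℍ) (Real.log a)) : ℂ)
      = ⟨s / 2, (s + 2) / 2⟩ := by
    apply Complex.ext
    · rfl
    · exact hcosh
  rw [hc, Complex.dist_eq] at hd
  have hd' : ‖(z : ℂ) - ⟨s / 2, (s + 2) / 2⟩‖ ≤ s / 2 := le_trans hd (le_of_eq hsinh)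
  have h1 : |z.re - s / 2| ≤ s / 2 := by
    refine le_trans ?_ hd'
    have := Complex.abs_re_le_norm ((z : ℂ) - ⟨s / 2, (s + 2) / 2⟩)
    simpa [Complex.sub_re] using this
  have h2 : |z.im - (s + 2) / 2| ≤ s / 2 := by
    refine le_trans ?_ hd'
    have := Complex.abs_im_le_norm ((z : ℂ) - ⟨s / 2, (s + 2) / 2⟩)
    simpa [Complex.sub_im] using this
  obtain ⟨h1a, h1b⟩ := abs_le.mp h1
  obtain ⟨h2a, h2b⟩ := abs_le.mp h2
  refine ⟨?_, ?_, ?_, ?_⟩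
  · show (0:ℝ) ≤ z.re
    nlinarith [sq_nonneg (a - 1)]
  · show z.re ≤ s
    nlinarith [sq_nonneg (a - 1)]
  · show (1:ℝ) ≤ z.im
    nlinarith
  · show z.im ≤ s + 1
    nlinarith [sq_nonneg (a - 1)]
end

section
/- Every finite point multiset in the hyperbolic plane has a centerpoint with balance 2/3: for every finite type V and map η : V → ℍ with n = card V, there exists a point p ∈ ℍ such that both open sides of every hyperbolic line through p each contain at most (2/3)·n of the points η v (with multiplicity). Concretely, there exists p ∈ ℍ such that: 3·#{v : Re(η v) < Re p} ≤ 2n and 3·#{v : Re(η v) > Re p} ≤ 2n, and for every real c: 3·#{v : |η v − c| < |p − c|} ≤ 2n and 3·#{v : |η v − c| > |p − c|} ≤ 2n. -/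
/-!
The map `z ↦ (Re z, |z|²)` sends `ℍ` into the open region above the parabola `y = x²`, and it
turns every hyperbolic line into a straight line: `|z - c|² = |z|² - 2c Re z + c²` is affine in
`(Re z, |z|²)`. The open sides of hyperbolic lines through `p` therefore become open half-planes
bounded by lines through the image of `p`. The planar centerpoint theorem, a consequence of Helly's
theorem, gives a point `q` of the convex hull of the lifted points all of whose open half-planes
hold at most `2n/3` of them; `q` lies above the parabola, hence is the image of some `p ∈ ℍ`.
-/

open scoped UpperHalfPlane
open Finset Module

section Centerpoint

variable {𝕜 E V : Type*} [Field 𝕜] [LinearOrder 𝕜] [IsStrictOrderedRing 𝕜]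
  [AddCommGroup E] [Module 𝕜 E] [FiniteDimensional 𝕜 E] [Fintype V]

lemma exists_forall_mem_of_card_mul_lt [DecidableEq V] [Nonempty V] {d : ℕ}
    (I : Finset (Finset V)) (hI : #I ≤ d + 1)
    (hlarge : ∀ S ∈ I, d * Fintype.card V < (d + 1) * #S) :
    ∃ v, ∀ S ∈ I, v ∈ S := by
  set n := Fintype.card V
  have hn : 0 < n := Fintype.card_pos
  have hcompl : ∀ S ∈ I, (d + 1) * #Sᶜ ≤ n - 1 := by
    intro S hS
    have hS := hlarge S hS
    have hle : #S ≤ n := card_le_univ S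
    suffices (d + 1) * (n - #S) < n by rw [card_compl]; exact Nat.le_sub_one_of_lt this
    zify [hle] at hS ⊢
    linarith
  have hunion : (d + 1) * #(I.biUnion (·ᶜ)) < (d + 1) * n :=
    calc (d + 1) * #(I.biUnion (·ᶜ))
        ≤ ∑ S ∈ I, (d + 1) * #Sᶜ := by rw [← mul_sum]; exact Nat.mul_le_mul_left _ card_biUnion_le
      _ ≤ #I * (n - 1) := by simpa using sum_le_sum hcompl
      _ ≤ (d + 1) * (n - 1) := Nat.mul_le_mul_right _ hI
      _ < (d + 1) * n := Nat.mul_lt_mul_of_pos_left (by omega) (by omega)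
  obtain ⟨v, -, hv⟩ := exists_mem_notMem_of_card_lt_card (t := univ)
    (Nat.lt_of_mul_lt_mul_left hunion)
  exact ⟨v, fun S hS => by simpa using fun h => hv (mem_biUnion.2 ⟨S, hS, mem_compl.2 h⟩)⟩

theorem exists_centerpoint [Nonempty V] (P : V → E) :
    ∃ q ∈ convexHull 𝕜 (Set.range P), ∀ f : E →ₗ[𝕜] 𝕜,
      (finrank 𝕜 E + 1) * Nat.card {v // f (P v) < f q} ≤ finrank 𝕜 E * Fintype.card V := by
  classical
  set d := finrank 𝕜 E
  set heavy : Finset (Finset V) := univ.filter fun S => d * Fintype.card V < (d + 1) * #S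
  obtain ⟨q, hq⟩ : (⋂ S ∈ heavy, convexHull 𝕜 (P '' S)).Nonempty := by
    refine Convex.helly_theorem' (fun S _ => convex_convexHull 𝕜 _) fun I hI hcard => ?_
    obtain ⟨v, hv⟩ := exists_forall_mem_of_card_mul_lt I hcard fun S hS => (mem_filter.1 (hI hS)).2
    exact ⟨P v, Set.mem_iInter₂.2 fun S hS => subset_convexHull 𝕜 _ ⟨v, hv S hS, rfl⟩⟩
  rw [Set.mem_iInter₂] at hq
  have huniv : univ ∈ heavy := by simp [heavy, Fintype.card_pos]
  refine ⟨q, by simpa using hq univ huniv, fun f => ?_⟩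
  set S := univ.filter fun v => f (P v) < f q
  rw [Nat.card_eq_fintype_card, Fintype.card_subtype]
  by_contra! hS
  have hsub : convexHull 𝕜 (P '' S) ⊆ {w | f w < f q} :=
    convexHull_min (by rintro _ ⟨v, hv, rfl⟩; exact (mem_filter.1 hv).2)
      (convex_halfSpace_lt f.isLinear _)
  exact lt_irrefl _ (hsub (hq S (mem_filter.2 ⟨mem_univ _, hS⟩)))

end Centerpoint

lemma convex_sq_lt : Convex ℝ {w : ℝ × ℝ | w.1 ^ 2 < w.2} := by
  simpa using (Even.convexOn_pow even_two).convex_strict_epigraph (𝕜 := ℝ)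

namespace UpperHalfPlane

def reNormSq (z : ℍ) : ℝ × ℝ := (z.re, Complex.normSq z)

lemma sq_reNormSq_fst_lt_snd (z : ℍ) : (reNormSq z).1 ^ 2 < (reNormSq z).2 := by
  simp only [reNormSq, Complex.normSq_apply, coe_re, coe_im]
  nlinarith [z.im_pos]

lemma exists_reNormSq_eq {q : ℝ × ℝ} (hq : q.1 ^ 2 < q.2) : ∃ z : ℍ, reNormSq z = q := by
  have hq' : 0 < q.2 - q.1 ^ 2 := by linarith
  refine ⟨⟨⟨q.1, √(q.2 - q.1 ^ 2)⟩, Real.sqrt_pos.2 hq'⟩, ?_⟩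
  ext
  · rfl
  · simp [reNormSq, Complex.normSq_apply, ← sq, Real.sq_sqrt hq'.le]

def circleFunctional (c : ℝ) : ℝ × ℝ →ₗ[ℝ] ℝ := LinearMap.snd ℝ ℝ ℝ - (2 * c) • LinearMap.fst ℝ ℝ ℝ

lemma normSq_sub_ofReal (z : ℍ) (c : ℝ) :
    Complex.normSq ((z : ℂ) - c) = circleFunctional c (reNormSq z) + c ^ 2 := by
  simp only [circleFunctional, reNormSq, Complex.normSq_apply, LinearMap.sub_apply,
    LinearMap.smul_apply, LinearMap.snd_apply, LinearMap.fst_apply, smul_eq_mul,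
    Complex.sub_re, Complex.sub_im, Complex.ofReal_re, Complex.ofReal_im, coe_re, coe_im]
  ring

lemma norm_sub_ofReal_lt_iff (z w : ℍ) (c : ℝ) :
    ‖(z : ℂ) - c‖ < ‖(w : ℂ) - c‖ ↔
      circleFunctional c (reNormSq z) < circleFunctional c (reNormSq w) := by
  rw [← sq_lt_sq₀ (norm_nonneg _) (norm_nonneg _), ← Complex.normSq_eq_norm_sq,
    ← Complex.normSq_eq_norm_sq, normSq_sub_ofReal, normSq_sub_ofReal, add_lt_add_iff_right]

end UpperHalfPlane

open UpperHalfPlane in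
/-- Every finite point multiset in the hyperbolic plane has a centerpoint
with balance `2/3`: there is `p ∈ ℍ` such that both open sides of every hyperbolic line
through `p` (vertical lines and semicircles centered on the real axis) each contain at
most `(2/3)·n` of the points (with multiplicity). -/
theorem stmt_13 {V : Type*} [Fintype V] (η : V → ℍ) :
    ∃ p : ℍ,
      3 * Nat.card {v : V // (η v).re < p.re} ≤ 2 * Fintype.card V ∧
      3 * Nat.card {v : V // p.re < (η v).re} ≤ 2 * Fintype.card V ∧
      ∀ c : ℝ,
        3 * Nat.card {v : V //
            ‖(η v : ℂ) - (c : ℂ)‖ < ‖(p : ℂ) - (c : ℂ)‖}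
          ≤ 2 * Fintype.card V ∧
        3 * Nat.card {v : V //
            ‖(p : ℂ) - (c : ℂ)‖ < ‖(η v : ℂ) - (c : ℂ)‖}
          ≤ 2 * Fintype.card V := by
  cases isEmpty_or_nonempty V
  · exact ⟨I, by simp, by simp, fun c => ⟨by simp, by simp⟩⟩
  obtain ⟨q, hq_hull, hq⟩ := exists_centerpoint (𝕜 := ℝ) (reNormSq ∘ η)
  have hq_above : q.1 ^ 2 < q.2 :=
    convexHull_min (Set.range_subset_iff.2 fun v => sq_reNormSq_fst_lt_snd (η v)) convex_sq_lt
      hq_hull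
  obtain ⟨p, rfl⟩ := exists_reNormSq_eq hq_above
  have key (f : ℝ × ℝ →ₗ[ℝ] ℝ) :
      3 * Nat.card {v // f (reNormSq (η v)) < f (reNormSq p)} ≤ 2 * Fintype.card V := by
    simpa [Module.finrank_prod] using hq f
  refine ⟨p, ?_, ?_, fun c => ⟨?_, ?_⟩⟩
  · simpa [reNormSq] using key (LinearMap.fst ℝ ℝ ℝ)
  · simpa [reNormSq] using key (-LinearMap.fst ℝ ℝ ℝ)
  · simpa only [norm_sub_ofReal_lt_iff] using key (circleFunctional c)
  · simpa only [norm_sub_ofReal_lt_iff, LinearMap.neg_apply, neg_lt_neg_iff]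
      using key (-circleFunctional c)
end

section
/- Let G be a simple graph on a finite type α with maximum degree at most Δ, where Δ ≥ 2, let k ≥ 1 be a natural number, and let G^k be the k-th power of G. Suppose G has a tree decomposition (T, σ) in which every bag has size at most w + 1. Then the bags σ'(b) = {u ∈ α : ∃ v ∈ σ(b), the distance from u to v in G is at most ⌈k/2⌉} form a tree decomposition of G^k on the same tree T, and every bag σ'(b) has size at most Δ^(⌈k/2⌉+1) · (w + 1). In particular, tw(G^k) ≤ Δ^(⌈k/2⌉+1)·(tw(G)+1) − 1. -/
open SimpleGraph

section walkAux
variable {α : Type*} {G : SimpleGraph α}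

lemma edist_getVert_left {u v : α} (p : G.Walk u v) (i : ℕ) :
    G.edist u (p.getVert i) ≤ i := by
  induction p generalizing i with
  | nil => simp [SimpleGraph.Walk.getVert, SimpleGraph.edist_self]
  | @cons a b c h q ih =>
    cases i with
    | zero => simp [SimpleGraph.edist_self]
    | succ n =>
      rw [SimpleGraph.Walk.getVert_cons_succ]
      calc G.edist a (q.getVert n) ≤ G.edist a b + G.edist b (q.getVert n) :=
            SimpleGraph.edist_triangle
        _ ≤ 1 + n := add_le_add (by simpa using SimpleGraph.edist_le h.toWalk) (ih n)
        _ = ((n + 1 : ℕ) : ℕ∞) := by push_cast; ring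

lemma edist_getVert_right {u v : α} (p : G.Walk u v) (i : ℕ) :
    G.edist (p.getVert i) v ≤ ((p.length - i : ℕ) : ℕ∞) := by
  induction p generalizing i with
  | nil => simp [SimpleGraph.Walk.getVert, SimpleGraph.edist_self]
  | @cons a b c h q ih =>
    cases i with
    | zero => simpa using SimpleGraph.edist_le (SimpleGraph.Walk.cons h q)
    | succ n =>
      rw [SimpleGraph.Walk.getVert_cons_succ]
      simpa [Nat.succ_sub_succ] using ih n

lemma exists_mid {u v : α} {k : ℕ} (h : G.edist u v ≤ (k : ℕ∞)) :
    ∃ x : α, G.edist u x ≤ (((k + 1) / 2 : ℕ) : ℕ∞) ∧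
      G.edist x v ≤ (((k + 1) / 2 : ℕ) : ℕ∞) := by
  have hne : G.edist u v ≠ ⊤ := fun ht => by simp [ht] at h
  obtain ⟨p, hp⟩ := SimpleGraph.exists_walk_of_edist_ne_top hne
  rw [← hp] at h
  have hlen : p.length ≤ k := by exact_mod_cast h
  refine ⟨p.getVert ((p.length + 1) / 2), ?_, ?_⟩
  · refine le_trans (edist_getVert_left p _) ?_
    exact_mod_cast Nat.div_le_div_right (by omega)
  · refine le_trans (edist_getVert_right p _) ?_
    have : p.length - (p.length + 1) / 2 ≤ (k + 1) / 2 := by omega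
    exact_mod_cast this

end walkAux

lemma induce_connected_iff_walks {β : Type*} (T : SimpleGraph β) (S : Set β) :
    (T.induce S).Connected ↔ S.Nonempty ∧
      ∀ u ∈ S, ∀ v ∈ S, ∃ p : T.Walk u v, ∀ x ∈ p.support, x ∈ S := by
  rw [SimpleGraph.connected_induce_iff,
    SimpleGraph.Subgraph.connected_iff_forall_exists_walk_subgraph]
  simp only [SimpleGraph.Subgraph.induce_verts, SimpleGraph.Subgraph.verts_top]
  constructor
  · rintro ⟨hne, h⟩
    refine ⟨hne, fun u hu v hv => ?_⟩
    obtain ⟨p, hp⟩ := h hu hv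
    exact ⟨p, fun x hx => hp.1 (p.mem_verts_toSubgraph.2 hx)⟩
  · rintro ⟨hne, h⟩
    refine ⟨hne, fun {u v} hu hv => ?_⟩
    obtain ⟨p, hp⟩ := h u hu v hv
    exact ⟨p, p.toSubgraph_le_induce_support.trans
      (SimpleGraph.Subgraph.induce_mono le_rfl (fun x hx => hp x hx))⟩

lemma ncard_biUnion_le' {ι α : Type*} [Fintype α] (I : Finset ι) (f : ι → Set α) :
    (⋃ i ∈ I, f i).ncard ≤ ∑ i ∈ I, (f i).ncard := by
  classical
  induction I using Finset.induction_on with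
  | empty => simp
  | @insert a s ha ih =>
    rw [Finset.set_biUnion_insert, Finset.sum_insert ha]
    exact le_trans (Set.ncard_union_le _ _) (Nat.add_le_add_left ih _)

lemma sphere_ncard_le {α : Type*} [Fintype α] (G : SimpleGraph α) (Δ : ℕ)
    (hdeg : ∀ v : α, {u : α | G.Adj v u}.ncard ≤ Δ) (v : α) :
    ∀ t : ℕ, {x : α | G.edist v x = (t : ℕ∞)}.ncard ≤ Δ ^ t := by
  classical
  intro t
  induction t with
  | zero =>
    have h0 : {x : α | G.edist v x = ((0 : ℕ) : ℕ∞)} = {v} := by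
      ext x
      simp only [Set.mem_setOf_eq, Set.mem_singleton_iff, Nat.cast_zero,
        SimpleGraph.edist_eq_zero_iff]
      exact ⟨fun h => h.symm, fun h => h.symm⟩
    simp [h0]
  | succ t ih =>
    set S : Set α := {x : α | G.edist v x = (t : ℕ∞)} with hS
    have hsub : {x : α | G.edist v x = ((t + 1 : ℕ) : ℕ∞)} ⊆
        ⋃ y ∈ (Set.toFinite S).toFinset, {x : α | G.Adj y x} := by
      intro x hx
      have hne : G.edist v x ≠ ⊤ := by rw [hx]; exact ENat.coe_ne_top _
      obtain ⟨p, hp⟩ := SimpleGraph.exists_walk_of_edist_ne_top hne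
      have hlen : p.length = t + 1 := by
        have : (p.length : ℕ∞) = ((t + 1 : ℕ) : ℕ∞) := by rw [hp]; exact hx
        exact_mod_cast this
      set y := p.getVert t with hy
      have hadj : G.Adj y x := by
        have := p.adj_getVert_succ (i := t) (by omega)
        rwa [show t + 1 = p.length by omega, p.getVert_length] at this
      have hley : G.edist v y ≤ (t : ℕ∞) := edist_getVert_left p t
      have hgey : (t : ℕ∞) ≤ G.edist v y := by
        have h1 : G.edist v x ≤ G.edist v y + G.edist y x := SimpleGraph.edist_triangle
        have h2 : G.edist y x ≤ 1 := by simpa using SimpleGraph.edist_le hadj.toWalk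
        have h3 : (t : ℕ∞) + 1 ≤ G.edist v y + 1 := by
          calc (t : ℕ∞) + 1 = ((t + 1 : ℕ) : ℕ∞) := by push_cast; ring
            _ = G.edist v x := hx.symm
            _ ≤ G.edist v y + G.edist y x := h1
            _ ≤ G.edist v y + 1 := add_le_add_right h2 _
        exact (WithTop.add_le_add_iff_right (by simp : (1 : ℕ∞) ≠ ⊤)).mp h3
      have hyS : y ∈ S := le_antisymm hley hgey
      exact Set.mem_biUnion ((Set.Finite.mem_toFinset _).mpr hyS) hadj
    calc {x : α | G.edist v x = ((t + 1 : ℕ) : ℕ∞)}.ncard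
        ≤ (⋃ y ∈ (Set.toFinite S).toFinset, {x : α | G.Adj y x}).ncard :=
          Set.ncard_le_ncard hsub (Set.toFinite _)
      _ ≤ ∑ y ∈ (Set.toFinite S).toFinset, {x : α | G.Adj y x}.ncard := ncard_biUnion_le' _ _
      _ ≤ ∑ _y ∈ (Set.toFinite S).toFinset, Δ := Finset.sum_le_sum (fun y _ => hdeg y)
      _ = (Set.toFinite S).toFinset.card * Δ := by rw [Finset.sum_const, smul_eq_mul]
      _ = S.ncard * Δ := by rw [Set.ncard_eq_toFinset_card S (Set.toFinite S)]
      _ ≤ Δ ^ t * Δ := Nat.mul_le_mul_right _ ih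
      _ = Δ ^ (t + 1) := by ring

lemma geom_sum_le_pow {Δ : ℕ} (hΔ : 2 ≤ Δ) (r : ℕ) :
    ∑ t ∈ Finset.range (r + 1), Δ ^ t ≤ Δ ^ (r + 1) := by
  induction r with
  | zero => simpa using (by omega : 1 ≤ Δ)
  | succ r ih =>
    rw [Finset.sum_range_succ]
    calc ∑ t ∈ Finset.range (r + 1), Δ ^ t + Δ ^ (r + 1)
        ≤ Δ ^ (r + 1) + Δ ^ (r + 1) := Nat.add_le_add_right ih _
      _ = 2 * Δ ^ (r + 1) := by ring
      _ ≤ Δ * Δ ^ (r + 1) := Nat.mul_le_mul_right _ hΔ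
      _ = Δ ^ (r + 2) := by ring

lemma ball_ncard_le {α : Type*} [Fintype α] (G : SimpleGraph α) (Δ : ℕ) (hΔ : 2 ≤ Δ)
    (hdeg : ∀ v : α, {u : α | G.Adj v u}.ncard ≤ Δ) (v : α) (r : ℕ) :
    {x : α | G.edist v x ≤ (r : ℕ∞)}.ncard ≤ Δ ^ (r + 1) := by
  classical
  have hsub : {x : α | G.edist v x ≤ (r : ℕ∞)} ⊆
      ⋃ t ∈ Finset.range (r + 1), {x : α | G.edist v x = (t : ℕ∞)} := by
    intro x hx
    have hne : G.edist v x ≠ ⊤ := fun ht => by simp [ht] at hx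
    obtain ⟨n, hn⟩ := WithTop.ne_top_iff_exists.mp hne
    have hx' : G.edist v x ≤ (r : ℕ∞) := hx
    have hnr : n ≤ r := by
      rw [← hn] at hx'
      exact WithTop.coe_le_coe.mp hx'
    have hmem : x ∈ {y : α | G.edist v y = ((n : ℕ) : ℕ∞)} := hn.symm
    exact Set.mem_biUnion (Finset.mem_range.2 (by omega)) hmem
  calc {x : α | G.edist v x ≤ (r : ℕ∞)}.ncard
      ≤ (⋃ t ∈ Finset.range (r + 1), {x : α | G.edist v x = (t : ℕ∞)}).ncard :=
        Set.ncard_le_ncard hsub (Set.toFinite _)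
    _ ≤ ∑ t ∈ Finset.range (r + 1), {x : α | G.edist v x = (t : ℕ∞)}.ncard :=
        ncard_biUnion_le' _ _
    _ ≤ ∑ t ∈ Finset.range (r + 1), Δ ^ t := Finset.sum_le_sum (fun t _ => sphere_ncard_le G Δ hdeg v t)
    _ ≤ Δ ^ (r + 1) := geom_sum_le_pow hΔ r


/-- A tree decomposition of a simple graph `G` on `α`: a tree `T` on `β` (connected and
acyclic) with bags `σ : β → Set α` such that every vertex is in some bag, every edge is
contained in some bag, and for every vertex the set of tree nodes whose bag contains it
induces a connected subgraph of `T`. -/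
def IsTreeDecomposition {α β : Type*} (G : SimpleGraph α) (T : SimpleGraph β)
    (σ : β → Set α) : Prop :=
  T.Connected ∧ T.IsAcyclic ∧
  (∀ v : α, ∃ b : β, v ∈ σ b) ∧
  (∀ u v : α, G.Adj u v → ∃ b : β, u ∈ σ b ∧ v ∈ σ b) ∧
  (∀ v : α, (T.induce {b : β | v ∈ σ b}).Connected)

/-- The `k`-th power of a simple graph: distinct vertices are adjacent iff their graph
distance is at most `k`. -/
def graphPower {α : Type*} (G : SimpleGraph α) (k : ℕ) : SimpleGraph α where
  Adj u v := u ≠ v ∧ G.edist u v ≤ k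
  symm := by
    constructor
    intro u v h
    exact ⟨h.1.symm, by rw [SimpleGraph.edist_comm]; exact h.2⟩
  loopless := by constructor; intro u h; exact h.1 rfl

/-- If `G` has maximum degree at most `Δ` (with `Δ ≥ 2`, `k ≥ 1`) and a tree
decomposition `(T, σ)` with all bags of size at most `w + 1`, then the enlarged bags
`σ' b = {u : ∃ v ∈ σ b, dist_G(u,v) ≤ ⌈k/2⌉}` form a tree decomposition of the `k`-th
power `G^k` on the same tree `T`, and every enlarged bag has size at most
`Δ^(⌈k/2⌉+1) · (w+1)`. -/
theorem stmt_14 {α β : Type*} [Fintype α] (G : SimpleGraph α) (Δ k w : ℕ)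
    (hΔ : 2 ≤ Δ) (hk : 1 ≤ k)
    (hdeg : ∀ v : α, {u : α | G.Adj v u}.ncard ≤ Δ)
    (T : SimpleGraph β) (σ : β → Set α)
    (hdecomp : IsTreeDecomposition G T σ)
    (hw : ∀ b : β, (σ b).ncard ≤ w + 1) :
    IsTreeDecomposition (graphPower G k) T
      (fun b => {u : α | ∃ v ∈ σ b, G.edist u v ≤ ((k + 1) / 2 : ℕ)}) ∧
    ∀ b : β, {u : α | ∃ v ∈ σ b, G.edist u v ≤ ((k + 1) / 2 : ℕ)}.ncard
      ≤ Δ ^ ((k + 1) / 2 + 1) * (w + 1) := by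

  classical
  obtain ⟨hTconn, hTacyc, hcover, hedge, hvconn⟩ := hdecomp
  set r : ℕ := (k + 1) / 2 with hr
  have key : ∀ (u : α) (t : ℕ), ∀ b : β, (∃ v ∈ σ b, G.edist u v ≤ (t : ℕ∞)) →
      ∃ b₀ : β, u ∈ σ b₀ ∧ ∃ p : T.Walk b b₀,
        ∀ x ∈ p.support, ∃ v ∈ σ x, G.edist u v ≤ (t : ℕ∞) := by
    intro u t
    induction t with
    | zero =>
      rintro b ⟨v, hv, hle⟩
      have h0 : G.edist u v = 0 := le_antisymm (by simpa using hle) zero_le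
      have huv : u = v := SimpleGraph.edist_eq_zero_iff.mp h0
      subst huv
      refine ⟨b, hv, SimpleGraph.Walk.nil, ?_⟩
      intro x hx
      rw [SimpleGraph.Walk.support_nil, List.mem_singleton] at hx
      subst hx
      exact ⟨u, hv, by simp [SimpleGraph.edist_self]⟩
    | succ t ih =>
      rintro b ⟨v, hv, hle⟩
      by_cases hcase : G.edist u v ≤ (t : ℕ∞)
      · obtain ⟨b₀, hb₀, p, hp⟩ := ih b ⟨v, hv, hcase⟩
        refine ⟨b₀, hb₀, p, ?_⟩
        intro x hx
        obtain ⟨z, hz, hzle⟩ := hp x hx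
        exact ⟨z, hz, le_trans hzle (by exact_mod_cast Nat.le_succ t)⟩
      · have hne : G.edist u v ≠ ⊤ := by
          intro h
          rw [h, top_le_iff] at hle
          exact ENat.coe_ne_top _ hle
        obtain ⟨p, hplen⟩ := SimpleGraph.exists_walk_of_edist_ne_top hne
        have hn1 : (t : ℕ∞) < (p.length : ℕ∞) := by rw [hplen]; exact lt_of_not_ge hcase
        have hnt : t < p.length := by exact_mod_cast hn1
        have hadj : G.Adj (p.getVert (p.length - 1)) v := by
          have h2 := p.adj_getVert_succ (i := p.length - 1) (by omega)
          rwa [show p.length - 1 + 1 = p.length by omega, p.getVert_length] at h2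
        obtain ⟨b', hb'1, hb'2⟩ := hedge _ _ hadj
        have hnle : p.length ≤ t + 1 := by
          have h3 : (p.length : ℕ∞) ≤ ((t + 1 : ℕ) : ℕ∞) := by rw [hplen]; exact hle
          exact_mod_cast h3
        have hdist' : G.edist u (p.getVert (p.length - 1)) ≤ (t : ℕ∞) := by
          refine le_trans (edist_getVert_left p _) ?_
          exact_mod_cast (by omega : p.length - 1 ≤ t)
        obtain ⟨b₀, hb₀, p', hp'⟩ := ih b' ⟨p.getVert (p.length - 1), hb'1, hdist'⟩
        have hvc := (induce_connected_iff_walks T {c : β | v ∈ σ c}).mp (hvconn v)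
        obtain ⟨q, hq⟩ := hvc.2 b hv b' hb'2
        refine ⟨b₀, hb₀, q.append p', ?_⟩
        intro x hx
        rw [SimpleGraph.Walk.mem_support_append_iff] at hx
        rcases hx with hx | hx
        · exact ⟨v, hq x hx, hle⟩
        · obtain ⟨z, hz, hzle⟩ := hp' x hx
          exact ⟨z, hz, le_trans hzle (by exact_mod_cast Nat.le_succ t)⟩
  constructor
  · refine ⟨hTconn, hTacyc, ?_, ?_, ?_⟩
    · intro v
      obtain ⟨b, hb⟩ := hcover v
      exact ⟨b, v, hb, by simp [SimpleGraph.edist_self]⟩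
    · rintro x y ⟨hxy, hd⟩
      obtain ⟨m, hm1, hm2⟩ := exists_mid hd
      obtain ⟨b, hb⟩ := hcover m
      exact ⟨b, ⟨m, hb, hm1⟩, ⟨m, hb, by rwa [SimpleGraph.edist_comm]⟩⟩
    · intro u
      rw [induce_connected_iff_walks]
      obtain ⟨b, hb⟩ := hcover u
      have hbmem : b ∈ {b : β | ∃ v ∈ σ b, G.edist u v ≤ (r : ℕ∞)} :=
        ⟨u, hb, by simp [SimpleGraph.edist_self]⟩
      refine ⟨⟨b, hbmem⟩, ?_⟩
      intro b₁ h₁ b₂ h₂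
      obtain ⟨c₁, hc₁, p₁, hp₁⟩ := key u r b₁ h₁
      obtain ⟨c₂, hc₂, p₂, hp₂⟩ := key u r b₂ h₂
      have huc := (induce_connected_iff_walks T {c : β | u ∈ σ c}).mp (hvconn u)
      obtain ⟨q, hq⟩ := huc.2 c₁ hc₁ c₂ hc₂
      refine ⟨(p₁.append q).append p₂.reverse, ?_⟩
      intro x hx
      rw [SimpleGraph.Walk.mem_support_append_iff, SimpleGraph.Walk.mem_support_append_iff,
        SimpleGraph.Walk.support_reverse, List.mem_reverse] at hx
      rcases hx with (hx | hx) | hx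
      · exact hp₁ x hx
      · exact ⟨u, hq x hx, by simp [SimpleGraph.edist_self]⟩
      · exact hp₂ x hx
  · intro b
    have hsub : {u : α | ∃ v ∈ σ b, G.edist u v ≤ (r : ℕ∞)} ⊆
        ⋃ v ∈ (Set.toFinite (σ b)).toFinset, {u : α | G.edist v u ≤ (r : ℕ∞)} := by
      rintro x ⟨v, hv, hle⟩
      exact Set.mem_biUnion ((Set.Finite.mem_toFinset _).mpr hv)
        (by rwa [SimpleGraph.edist_comm] at hle)
    calc {u : α | ∃ v ∈ σ b, G.edist u v ≤ (r : ℕ∞)}.ncard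
        ≤ (⋃ v ∈ (Set.toFinite (σ b)).toFinset, {u : α | G.edist v u ≤ (r : ℕ∞)}).ncard :=
          Set.ncard_le_ncard hsub (Set.toFinite _)
      _ ≤ ∑ v ∈ (Set.toFinite (σ b)).toFinset, {u : α | G.edist v u ≤ (r : ℕ∞)}.ncard :=
          ncard_biUnion_le' _ _
      _ ≤ ∑ _v ∈ (Set.toFinite (σ b)).toFinset, Δ ^ (r + 1) :=
          Finset.sum_le_sum (fun v _ => ball_ncard_le G Δ hΔ hdeg v r)
      _ = (Set.toFinite (σ b)).toFinset.card * Δ ^ (r + 1) := by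
          rw [Finset.sum_const, smul_eq_mul]
      _ = (σ b).ncard * Δ ^ (r + 1) := by
          rw [Set.ncard_eq_toFinset_card (σ b) (Set.toFinite _)]
      _ ≤ (w + 1) * Δ ^ (r + 1) := Nat.mul_le_mul_right _ (hw b)
      _ = Δ ^ (r + 1) * (w + 1) := Nat.mul_comm _ _
end

section
/- Let G be a simple graph on a finite type α with a tree decomposition (T, σ) in which every bag has size at most w + 1, and let k ≥ 1 be a natural number. Then the bags σ'(b) = σ(b) × (Fin k) form a tree decomposition of the k-fold blowup G^(k) (a graph on α × Fin k) on the same tree T, and every bag σ'(b) has size at most k·(w + 1). In particular, tw(G^(k)) ≤ k·tw(G) + k − 1. -/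
/-- The `k`-fold blowup of a simple graph `G` on `α`: the graph on `α × Fin k` where
`(a, i)` and `(a', i')` are adjacent iff `(a, i) ≠ (a', i')` and (`a = a'` or `G.Adj a a'`). -/
def blowup {α : Type*} (G : SimpleGraph α) (k : ℕ) : SimpleGraph (α × Fin k) where
  Adj x y := x ≠ y ∧ (x.1 = y.1 ∨ G.Adj x.1 y.1)
  symm := by
    constructor
    intro x y h
    exact ⟨h.1.symm, h.2.imp Eq.symm G.adj_symm⟩
  loopless := by constructor; intro x h; exact h.1 rfl

/-! The bags of the blowup are the preimages of the old bags under the projection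
`α × Fin k → α`. This projection sends every edge of `G^(k)` to an edge of `G` or collapses it
to a vertex, and pulling a tree decomposition back along any such map gives a tree
decomposition on the same tree, since the nodes whose bag contains `x` are exactly those whose
bag contains its image. A bag `σ b × Fin k` has `k · |σ b|` elements. -/

theorem IsTreeDecomposition.comap {α α' β : Type*} {G : SimpleGraph α} {T : SimpleGraph β}
    {σ : β → Set α} (hd : IsTreeDecomposition G T σ) (H : SimpleGraph α') (f : α' → α)
    (hf : ∀ x y, H.Adj x y → f x = f y ∨ G.Adj (f x) (f y)) :
    IsTreeDecomposition H T (fun b => f ⁻¹' σ b) := by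
  obtain ⟨hconn, hacyc, hcover, hedge, hsub⟩ := hd
  refine ⟨hconn, hacyc, fun x => hcover (f x), fun x y hxy => ?_, fun x => hsub (f x)⟩
  rcases hf x y hxy with hxy | hxy
  · obtain ⟨b, hb⟩ := hcover (f x)
    exact ⟨b, hb, show f y ∈ σ b from hxy ▸ hb⟩
  · exact hedge _ _ hxy

theorem blowup_adj_fst {α : Type*} (G : SimpleGraph α) (k : ℕ) (x y : α × Fin k)
    (h : (blowup G k).Adj x y) : x.1 = y.1 ∨ G.Adj x.1 y.1 :=
  h.2

theorem ncard_preimage_fst_fin {α : Type*} (s : Set α) (k : ℕ) :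
    {x : α × Fin k | x.1 ∈ s}.ncard = k * s.ncard := by
  change (Prod.fst ⁻¹' s).ncard = _
  rw [← Set.prod_univ, Set.ncard_prod, Set.ncard_univ, Nat.card_eq_fintype_card,
    Fintype.card_fin, mul_comm]

theorem stmt_15_general {α β : Type*} (G : SimpleGraph α) (k w : ℕ)
    (T : SimpleGraph β) (σ : β → Set α)
    (hdecomp : IsTreeDecomposition G T σ)
    (hw : ∀ b : β, (σ b).ncard ≤ w + 1) :
    IsTreeDecomposition (blowup G k) T
      (fun b => {x : α × Fin k | x.1 ∈ σ b}) ∧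
    ∀ b : β, {x : α × Fin k | x.1 ∈ σ b}.ncard ≤ k * (w + 1) := by
  refine ⟨hdecomp.comap (blowup G k) Prod.fst (blowup_adj_fst G k), fun b => ?_⟩
  rw [ncard_preimage_fst_fin]
  exact Nat.mul_le_mul_left k (hw b)

/-- If `G` has a tree decomposition `(T, σ)` with all bags of size at most
`w + 1` and `k ≥ 1`, then the bags `σ' b = σ b × Fin k` form a tree decomposition of the
`k`-fold blowup `G^(k)` on the same tree `T`, and every bag `σ' b` has size at most
`k · (w + 1)`. -/
theorem stmt_15 {α β : Type*} [Fintype α] (G : SimpleGraph α) (k w : ℕ) (hk : 1 ≤ k)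
    (T : SimpleGraph β) (σ : β → Set α)
    (hdecomp : IsTreeDecomposition G T σ)
    (hw : ∀ b : β, (σ b).ncard ≤ w + 1) :
    IsTreeDecomposition (blowup G k) T
      (fun b => {x : α × Fin k | x.1 ∈ σ b}) ∧
    ∀ b : β, {x : α × Fin k | x.1 ∈ σ b}.ncard ≤ k * (w + 1) :=
  stmt_15_general G k w T σ hdecomp hw
end

section
/- For every natural number n ≥ 2 and every real δ > 0: 2·arsinh(sin(π/n) · sinh(4δ) · n) > 8δ. (This shows that two consecutive radial half-lines at angle 2π/n apart, truncated at hyperbolic distance r₀ = arsinh(n·sinh(4δ)) from their common apex, are at hyperbolic distance more than 8δ from each other, since that distance equals 2·arsinh(sin(π/n)·sinh r₀).) -/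
open Real

/-- Jordan's inequality `sin x ≥ (2/π) x` on `[0, π/2]`, applied at `x = π / a`. -/
theorem two_le_mul_sin_pi_div {a : ℝ} (ha : 2 ≤ a) : 2 ≤ a * sin (π / a) := by
  have ha₀ : 0 < a := by linarith
  have hjordan : 2 / π * (π / a) ≤ sin (π / a) := by
    refine mul_le_sin (by positivity) ?_
    rw [div_le_div_iff₀ ha₀ two_pos]
    nlinarith [pi_pos]
  calc 2 = a * (2 / π * (π / a)) := by field_simp
    _ ≤ a * sin (π / a) := by gcongr

theorem lt_arsinh_mul_sinh {t c : ℝ} (ht : 0 < t) (hc : 1 < c) : t < arsinh (c * sinh t) := by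
  have hsinh : sinh t < c * sinh t := lt_mul_of_one_lt_left (sinh_pos_iff.2 ht) hc
  simpa only [arsinh_sinh] using arsinh_strictMono hsinh

/-- For every `n ≥ 2` and `δ > 0`:
`2·arsinh(sin(π/n) · sinh(4δ) · n) > 8δ`. -/
theorem stmt_17 (n : ℕ) (hn : 2 ≤ n) (δ : ℝ) (hδ : 0 < δ) :
    8 * δ < 2 * Real.arsinh (Real.sin (π / n) * Real.sinh (4 * δ) * n) := by
  have hfactor : 2 ≤ (n : ℝ) * sin (π / n) := two_le_mul_sin_pi_div (by exact_mod_cast hn)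
  have key : 4 * δ < arsinh ((n * sin (π / n)) * sinh (4 * δ)) :=
    lt_arsinh_mul_sinh (by positivity) (by linarith)
  rw [show sin (π / n) * sinh (4 * δ) * n = (n * sin (π / n)) * sinh (4 * δ) by ring]
  linarith
end

section
/- For all reals ρ > 0 and ν ≥ 1 and every natural number k, there exists a natural number D such that every finite simple graph admitting a (ρ,ν)-noisy, (ρ,k)-shallow embedding into the hyperbolic plane ℍ has maximum degree at most D; that is, every vertex has at most D neighbors. -/
open scoped UpperHalfPlane

/-! A vertex's neighbours lie in the hyperbolic ball of radius `2ρν` around it. Since `SL(2, ℝ)`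
acts transitively by isometries and `ℍ` is proper, every such ball is covered by some fixed
number `N` of `ρ`-balls, and shallowness puts at most `k` vertices in each of them; so every
degree is at most `k * N`. -/

open Metric
open scoped MatrixGroups Pointwise

theorem ncard_preimage_le_mul_card_of_subset_biUnion_closedBall {V M : Type*} [Finite V]
    [PseudoMetricSpace M] (η : V → M) {S : Set M} {s : Finset M} {r : ℝ} {k : ℕ}
    (hS : S ⊆ ⋃ c ∈ s, closedBall c r) (hk : ∀ c, (η ⁻¹' closedBall c r).ncard ≤ k) :
    (η ⁻¹' S).ncard ≤ k * s.card :=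
  calc (η ⁻¹' S).ncard
      ≤ (⋃ c ∈ s, η ⁻¹' closedBall c r).ncard := by
        refine Set.ncard_le_ncard ?_
        simpa only [Set.preimage_iUnion] using Set.preimage_mono hS
    _ ≤ ∑ c ∈ s, (η ⁻¹' closedBall c r).ncard := s.set_ncard_biUnion_le _
    _ ≤ s.card • k := Finset.sum_le_card_nsmul _ _ _ fun c _ => hk c
    _ = k * s.card := by rw [smul_eq_mul, mul_comm]

theorem exists_finset_closedBall_cover (M : Type*) [PseudoMetricSpace M] [ProperSpace M]
    (x : M) (R : ℝ) {r : ℝ} (hr : 0 < r) :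
    ∃ s : Finset M, closedBall x R ⊆ ⋃ c ∈ s, closedBall c r := by
  obtain ⟨t, -, ht, hcover⟩ := (isCompact_closedBall x R).finite_cover_balls hr
  refine ⟨ht.toFinset, hcover.trans ?_⟩
  simp only [Set.Finite.mem_toFinset]
  exact Set.biUnion_mono subset_rfl fun c _ => ball_subset_closedBall

theorem exists_uniform_closedBall_cover (G : Type*) {M : Type*} [Group G] [PseudoMetricSpace M]
    [ProperSpace M] [MulAction G M] [IsIsometricSMul G M] [MulAction.IsPretransitive G M]
    (R : ℝ) {r : ℝ} (hr : 0 < r) :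
    ∃ N : ℕ, ∀ x : M, ∃ s : Finset M, s.card ≤ N ∧ closedBall x R ⊆ ⋃ c ∈ s, closedBall c r := by
  classical
  rcases isEmpty_or_nonempty M with _ | ⟨⟨x₀⟩⟩
  · exact ⟨0, fun x => isEmptyElim x⟩
  obtain ⟨s, hs⟩ := exists_finset_closedBall_cover M x₀ R hr
  refine ⟨s.card, fun x => ?_⟩
  obtain ⟨g, rfl⟩ := MulAction.exists_smul_eq G x₀ x
  refine ⟨s.image (g • ·), Finset.card_image_le, ?_⟩
  calc closedBall (g • x₀) R = g • closedBall x₀ R := (Metric.smul_closedBall g x₀ R).symm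
    _ ⊆ g • ⋃ c ∈ s, closedBall c r := Set.smul_set_mono hs
    _ = ⋃ c ∈ s.image (g • ·), closedBall c r := by
      simp only [Set.smul_set_iUnion₂, Metric.smul_closedBall, Finset.set_biUnion_finset_image]

theorem ncard_neighborSet_le_mul_card_of_subset_biUnion_closedBall {V M : Type*} [Finite V]
    [PseudoMetricSpace M] (G : SimpleGraph V) (η : V → M) {v : V} {R r : ℝ} {k : ℕ}
    {s : Finset M} (hR : ∀ w, G.Adj v w → dist (η v) (η w) ≤ R)
    (hs : closedBall (η v) R ⊆ ⋃ c ∈ s, closedBall c r)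
    (hk : ∀ c, (η ⁻¹' closedBall c r).ncard ≤ k) :
    (G.neighborSet v).ncard ≤ k * s.card :=
  calc (G.neighborSet v).ncard ≤ (η ⁻¹' closedBall (η v) R).ncard :=
        Set.ncard_le_ncard fun w hw => mem_closedBall'.2 (hR w hw)
    _ ≤ k * s.card := ncard_preimage_le_mul_card_of_subset_biUnion_closedBall η hs hk

theorem stmt_18_general (ρ ν : ℝ) (hρ : 0 < ρ) (k : ℕ) :
    ∃ D : ℕ, ∀ (V : Type) [Fintype V] (G : SimpleGraph V) (η : V → ℍ),
      (∀ v w : V, v ≠ w →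
        (dist (η v) (η w) < 2 * ρ → G.Adj v w) ∧
        (dist (η v) (η w) > 2 * ρ * ν → ¬ G.Adj v w)) →
      (∀ x : ℍ, Nat.card {v : V // dist (η v) x ≤ ρ} ≤ k) →
      ∀ v : V, Nat.card {w : V // G.Adj v w} ≤ D := by
  obtain ⟨N, hN⟩ := exists_uniform_closedBall_cover SL(2, ℝ) (M := ℍ) (2 * ρ * ν) hρ
  refine ⟨k * N, fun V _ G η hnoisy hshallow v => ?_⟩
  obtain ⟨s, hsN, hs⟩ := hN (η v)
  have hR : ∀ w, G.Adj v w → dist (η v) (η w) ≤ 2 * ρ * ν := fun w hvw =>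
    not_lt.1 fun h => (hnoisy v w hvw.ne).2 h hvw
  calc Nat.card {w : V // G.Adj v w} ≤ k * s.card :=
        ncard_neighborSet_le_mul_card_of_subset_biUnion_closedBall G η hR hs hshallow
    _ ≤ k * N := Nat.mul_le_mul_left k hsN

/-- For all `ρ > 0`, `ν ≥ 1` and `k : ℕ`, there is a bound `D` such that
every finite simple graph admitting a `(ρ,ν)`-noisy, `(ρ,k)`-shallow embedding into the
hyperbolic plane has maximum degree at most `D`. -/
theorem stmt_18 (ρ ν : ℝ) (hρ : 0 < ρ) (hν : 1 ≤ ν) (k : ℕ) :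
    ∃ D : ℕ, ∀ (V : Type) [Fintype V] (G : SimpleGraph V) (η : V → ℍ),
      (∀ v w : V, v ≠ w →
        (dist (η v) (η w) < 2 * ρ → G.Adj v w) ∧
        (dist (η v) (η w) > 2 * ρ * ν → ¬ G.Adj v w)) →
      (∀ x : ℍ, Nat.card {v : V // dist (η v) x ≤ ρ} ≤ k) →
      ∀ v : V, Nat.card {w : V // G.Adj v w} ≤ D :=
  stmt_18_general ρ ν hρ k
end
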